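/- arXiv:2307.08534 — 4 statements merged into one kernel-verified Lean document; each statement's English description precedes it below -/
import Mathlib

section
/- Let G be a finite group, N ⊴ G a normal subgroup, and p a prime number. Let φ be an irreducible complex character of N that is G-invariant and such that φ(1)·o(φ) is a power of p. If p does not divide the order of the Schur multiplier M(G/N), then φ extends to an irreducible character of G, i.e., there exists χ ∈ Irr(G) whose restriction to N equals φ. -/
open CategoryTheory

/-- The group of `2`-cocycles of `S` with values in `ℂˣ` (trivial action). -/
def twoCocycles (S : Type*) [Group S] : Subgroup (S × S → ℂˣ) where
  carrier := {f | ∀ a b c : S, f (a, b) * f (a * b, c) = f (b, c) * f (a, b * c)}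
  one_mem' := by intro a b c; simp
  mul_mem' := by
    intro f g hf hg a b c
    simp only [Pi.mul_apply]
    rw [mul_mul_mul_comm, hf a b c, hg a b c, mul_mul_mul_comm]
  inv_mem' := by
    intro f hf a b c
    simp only [Pi.inv_apply]
    rw [← mul_inv, hf a b c, mul_inv]

/-- The group of `2`-coboundaries of `S` with values in `ℂˣ` (trivial action). -/
def twoCoboundaries (S : Type*) [Group S] : Subgroup (S × S → ℂˣ) where
  carrier := {f | ∃ g : S → ℂˣ, ∀ a b : S, f (a, b) = g a * g b * (g (a * b))⁻¹}
  one_mem' := ⟨1, by intro a b; simp⟩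
  mul_mem' := by
    rintro f f' ⟨g, hg⟩ ⟨g', hg'⟩
    refine ⟨g * g', fun a b => ?_⟩
    simp only [Pi.mul_apply, mul_inv, hg a b, hg' a b]
    ac_rfl
  inv_mem' := by
    rintro f ⟨g, hg⟩
    refine ⟨g⁻¹, fun a b => ?_⟩
    simp only [Pi.inv_apply, hg a b, mul_inv, inv_inv]

/-- The Schur multiplier of `S`, identified with `H²(S, ℂˣ)` for the trivial action:
`2`-cocycles modulo `2`-coboundaries. -/
def schurMultiplier (S : Type*) [Group S] : Type _ :=
  ↥(twoCocycles S) ⧸ (twoCoboundaries S).subgroupOf (twoCocycles S)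

/-- The determinantal order `o(χ)` of the character of a representation `V` :
the order of the linear character `det ∘ ρ` in the group of linear characters. -/
noncomputable def charDetOrder {G : Type} [Group G] (V : FDRep ℂ G) : ℕ :=
  orderOf ((LinearMap.det : (V →ₗ[ℂ] V) →* ℂ).comp V.ρ)

/-!
Since `φ` is `G`-invariant, each conjugate of `φ` has the same character, hence is isomorphic
to `φ`; choosing these intertwiners on a transversal of `N` produces a map `U` from `G` to
`GL(φ)` that extends `φ` and is multiplicative up to scalars `α(gN, hN)`. By Schur's lemma and
associativity, `α` is a `2`-cocycle of `G/N`. Taking determinants and raising to the power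
`o(φ)` kills the contribution of `N`, so `α ^ (φ(1) o(φ))` is a coboundary. As `φ(1) o(φ)` is a
power of `p`, which is coprime to `|M(G/N)|`, the class of `α` is trivial, and rescaling `U` by
the corresponding scalars gives a representation of `G` extending `φ`; it is irreducible
because its restriction to `N` is.
-/

instance (S : Type*) [Group S] : CommGroup (schurMultiplier S) :=
  inferInstanceAs (CommGroup (↥(twoCocycles S) ⧸ (twoCoboundaries S).subgroupOf (twoCocycles S)))

theorem mem_twoCoboundaries_of_pow_mem {Q : Type*} [Group Q] {f : Q × Q → ℂˣ} {n : ℕ}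
    (hn : (Nat.card (schurMultiplier Q)).Coprime n) (hf : f ∈ twoCocycles Q)
    (hfn : f ^ n ∈ twoCoboundaries Q) : f ∈ twoCoboundaries Q := by
  let x : schurMultiplier Q := QuotientGroup.mk ⟨f, hf⟩
  have hx : x ^ n = 1 ^ n := by
    rw [one_pow]
    exact (QuotientGroup.eq_one_iff _).mpr hfn
  have hx1 : x = 1 := hn.pow_left_bijective.injective hx
  exact (QuotientGroup.eq_one_iff (⟨f, hf⟩ : twoCocycles Q)).mp hx1

section CompatibleLift

variable {G M : Type*} [Group G] [Group M] {N : Subgroup G} [N.Normal]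

-- The intertwiners of Isaacs' construction (Character Theory of Finite Groups, 11.2) of a
-- projective representation of `G` extending `ρ`.
structure IsCompatibleLift (ρ : N →* M) (U : G → M) : Prop where
  map_mul_coe : ∀ (g : G) (n : N), U (g * n) = U g * ρ n
  map_conj : ∀ (g : G) (n : N), U g * ρ n * (U g)⁻¹ = ρ (MulAut.conjNormal g n)

theorem exists_isCompatibleLift (ρ : N →* M)
    (h : ∀ g : G, ∃ t : M, ∀ n : N, t * ρ n * t⁻¹ = ρ (MulAut.conjNormal g n)) :
    ∃ U : G → M, IsCompatibleLift ρ U := by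
  choose t ht using h
  let s : G → G := fun g => (g : G ⧸ N).out
  have hs : ∀ g, (s g)⁻¹ * g ∈ N := fun g => QuotientGroup.eq.mp (QuotientGroup.out_eq' _)
  have hs_mul : ∀ g (n : N), s (g * n) = s g := fun g n => by
    simp only [s, QuotientGroup.mk_mul, (QuotientGroup.eq_one_iff _).mpr n.2, mul_one]
  let ν : G → N := fun g => ⟨(s g)⁻¹ * g, hs g⟩
  refine ⟨fun g => t (s g) * ρ (ν g), fun g n => ?_, fun g n => ?_⟩
  · have hν : ν (g * n) = ν g * n := Subtype.ext (by simp [ν, hs_mul, mul_assoc])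
    simp only [hν, map_mul, hs_mul, mul_assoc]
  · have hconj : MulAut.conjNormal (s g) (ν g * n * (ν g)⁻¹) = MulAut.conjNormal g n :=
      Subtype.ext (by simp [ν, MulAut.conjNormal_apply, mul_assoc])
    rw [← hconj, ← ht, map_mul, map_mul, map_inv]
    group

namespace IsCompatibleLift

variable {ρ : N →* M} {U : G → M}

theorem commute_mul_mul_inv (hU : IsCompatibleLift ρ U) (g h : G) (n : N) :
    Commute (U g * U h * (U (g * h))⁻¹) (ρ n) := by
  obtain ⟨m, rfl⟩ := (MulAut.conjNormal (g * h)).surjective n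
  have hgh : U g * U h * ρ m * (U g * U h)⁻¹ = ρ (MulAut.conjNormal (g * h) m) := by
    rw [map_mul, MulAut.mul_apply, ← hU.map_conj, ← hU.map_conj]
    group
  calc U g * U h * (U (g * h))⁻¹ * ρ (MulAut.conjNormal (g * h) m)
      = U g * U h * (U (g * h))⁻¹ * (U (g * h) * ρ m * (U (g * h))⁻¹) := by rw [hU.map_conj]
    _ = (U g * U h * ρ m * (U g * U h)⁻¹) * (U g * U h * (U (g * h))⁻¹) := by group
    _ = _ := by rw [hgh]

theorem mul_mul_inv_mul_coe_left (hU : IsCompatibleLift ρ U) (g h : G) (n : N) :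
    U (g * n) * U h * (U (g * n * h))⁻¹ = U g * U h * (U (g * h))⁻¹ := by
  have hn : g * n * h = g * h * (MulAut.conjNormal h⁻¹ n) := by simp [mul_assoc]
  have hconj : U h * ρ (MulAut.conjNormal h⁻¹ n) * (U h)⁻¹ = ρ n := by
    rw [hU.map_conj, ← MulAut.mul_apply, ← map_mul, mul_inv_cancel, map_one, MulAut.one_apply]
  rw [hn, hU.map_mul_coe, hU.map_mul_coe, ← hconj]
  group

theorem mul_mul_inv_mul_coe_right (hU : IsCompatibleLift ρ U) (g h : G) (n : N) :
    U g * U (h * n) * (U (g * (h * n)))⁻¹ = U g * U h * (U (g * h))⁻¹ := by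
  rw [← mul_assoc, hU.map_mul_coe, hU.map_mul_coe]
  group

theorem exists_factorSet (hU : IsCompatibleLift ρ U) (ι : ℂˣ →* M)
    (hscalar : ∀ x : M, (∀ n, Commute x (ρ n)) → ∃ c, x = ι c) :
    ∃ α : G ⧸ N → G ⧸ N → ℂˣ, ∀ g h : G, U g * U h = ι (α g h) * U (g * h) := by
  choose α hα using fun a b : G ⧸ N => hscalar _ (hU.commute_mul_mul_inv a.out b.out)
  refine ⟨α, fun g h => ?_⟩
  obtain ⟨n, hn⟩ := QuotientGroup.mk_out_eq_mul N g
  obtain ⟨m, hm⟩ := QuotientGroup.mk_out_eq_mul N h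
  have hgh := hα g h
  rw [hn, hm, hU.mul_mul_inv_mul_coe_right, hU.mul_mul_inv_mul_coe_left] at hgh
  rw [← hgh]
  group

end IsCompatibleLift

variable {ι : ℂˣ →* M} {U : G → M} {α : G ⧸ N → G ⧸ N → ℂˣ}

theorem mem_twoCocycles_of_mul_eq (hι : Function.Injective ι)
    (hcent : ∀ c, ι c ∈ Subgroup.center M)
    (hα : ∀ g h : G, U g * U h = ι (α g h) * U (g * h)) :
    (fun x => α x.1 x.2) ∈ twoCocycles (G ⧸ N) := by
  intro a b c
  induction a using QuotientGroup.induction_on with | H g => ?_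
  induction b using QuotientGroup.induction_on with | H h => ?_
  induction c using QuotientGroup.induction_on with | H k => ?_
  apply hι
  apply mul_right_cancel (b := U (g * h * k))
  calc ι (α g h * α (g * h : G) k) * U (g * h * k)
      = ι (α g h) * U (g * h) * U k := by rw [map_mul, mul_assoc, ← hα, mul_assoc]
    _ = U g * (U h * U k) := by rw [← hα, mul_assoc]
    _ = ι (α h k) * (U g * U (h * k)) := by
        rw [hα h k, ← mul_assoc, Subgroup.mem_center_iff.mp (hcent _) (U g), mul_assoc]
    _ = ι (α h k * α g (h * k : G)) * U (g * h * k) := by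
        rw [hα, map_mul, mul_assoc, mul_assoc]

namespace IsCompatibleLift

variable {ρ : N →* M}

-- `f (U g) ^ o` only depends on the coset `gN`, so it provides the coboundary.
theorem pow_mem_twoCoboundaries (hU : IsCompatibleLift ρ U) (f : M →* ℂˣ) {d o : ℕ}
    (hfι : ∀ c, f (ι c) = c ^ d) (hfρ : ∀ n, f (ρ n) ^ o = 1)
    (hα : ∀ g h : G, U g * U h = ι (α g h) * U (g * h)) :
    (fun x => α x.1 x.2) ^ (d * o) ∈ twoCoboundaries (G ⧸ N) := by
  let E : G → ℂˣ := fun g => f (U g) ^ o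
  have hE : ∀ g (n : N), E (g * n) = E g := fun g n => by
    simp only [E, hU.map_mul_coe, map_mul, mul_pow, hfρ, mul_one]
  have hE_out : ∀ g : G, E g = E (g : G ⧸ N).out := fun g => by
    obtain ⟨n, hn⟩ := QuotientGroup.mk_out_eq_mul N g
    rw [hn, hE]
  refine ⟨fun q => E q.out, fun a b => ?_⟩
  induction a using QuotientGroup.induction_on with | H g => ?_
  induction b using QuotientGroup.induction_on with | H h => ?_
  have hgh := congrArg (fun x => f x ^ o) (hα g h)
  simp only [map_mul, mul_pow, hfι, ← pow_mul] at hgh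
  simp only [Pi.pow_apply, ← QuotientGroup.mk_mul, ← hE_out, E, hgh]
  group

theorem exists_extension_of_mem_twoCoboundaries (hU : IsCompatibleLift ρ U)
    (hcent : ∀ c, ι c ∈ Subgroup.center M)
    (hα : ∀ g h : G, U g * U h = ι (α g h) * U (g * h))
    (hcob : (fun x => α x.1 x.2) ∈ twoCoboundaries (G ⧸ N)) :
    ∃ σ : G →* M, ∀ n : N, σ n = ρ n := by
  obtain ⟨β, hβ⟩ := hcob
  let σ : G →* M := MonoidHom.mk' (fun g => ι (β g)⁻¹ * U g) fun g h => by
    have hαβ : α g h = β g * β h * (β (g * h : G))⁻¹ := hβ g h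
    calc ι (β (g * h : G))⁻¹ * U (g * h)
          = ι ((β g)⁻¹ * (β h)⁻¹ * α g h) * U (g * h) := by
          rw [hαβ, ← mul_inv, inv_mul_cancel_left]
      _ = ι (β g)⁻¹ * ι (β h)⁻¹ * (U g * U h) := by rw [hα, map_mul, map_mul, mul_assoc]
      _ = ι (β g)⁻¹ * U g * (ι (β h)⁻¹ * U h) := by
          simp only [mul_assoc]
          rw [← mul_assoc (U g), Subgroup.mem_center_iff.mp (hcent _) (U g), mul_assoc]
  refine ⟨σ, fun n => ?_⟩
  have hn : ((n : G) : G ⧸ N) = 1 := (QuotientGroup.eq_one_iff _).mpr n.2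
  -- `U 1` need not be `1`: the normalisation comes from `σ 1 = 1`.
  calc σ n = ι (β 1)⁻¹ * U (1 * n) := by rw [one_mul, ← hn]; rfl
    _ = σ 1 * ρ n := by rw [hU.map_mul_coe, ← mul_assoc]; rfl
    _ = ρ n := by rw [map_one, one_mul]

end IsCompatibleLift

end CompatibleLift

section ScalarUnits

variable (k V : Type*) [Field k] [AddCommGroup V] [Module k V]

abbrev scalarUnits : kˣ →* (Module.End k V)ˣ :=
  Units.map (algebraMap k (Module.End k V)).toMonoidHom

variable {k V}

theorem scalarUnits_mem_center (c : kˣ) :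
    scalarUnits k V c ∈ Subgroup.center (Module.End k V)ˣ :=
  Subgroup.mem_center_iff.mpr fun _ => Units.ext (Algebra.commutes _ _).symm

theorem scalarUnits_injective [Nontrivial V] : Function.Injective (scalarUnits k V) :=
  Units.map_injective (algebraMap k (Module.End k V)).injective

theorem det_scalarUnits (c : kˣ) :
    Units.map LinearMap.det (scalarUnits k V c) = c ^ Module.finrank k V := by
  ext
  show LinearMap.det (algebraMap k (Module.End k V) c) = (c : k) ^ _
  rw [Module.algebraMap_end_eq_smul_id, LinearMap.det_smul, LinearMap.det_id, mul_one]

end ScalarUnits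

namespace FDRep

section Schur

variable {k H : Type*} [Field k] [Monoid H]

theorem nontrivial_of_simple (X : FDRep k H) [Simple X] : Nontrivial X := by
  refine not_subsingleton_iff_nontrivial.mp fun _ => id_nonzero X ?_
  ext x
  exact Subsingleton.elim _ _

variable [IsAlgClosed k]

theorem exists_eq_algebraMap_of_commute (X : FDRep k H) [Simple X]
    (f : Module.End k X) (hf : ∀ h, Commute f (X.ρ h)) : ∃ c : k, f = algebraMap k _ c := by
  let F : X ⟶ X := ⟨ConcreteCategory.ofHom (C := FGModuleCat k) f, fun h => by
    ext x; exact LinearMap.congr_fun (hf h) x⟩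
  obtain ⟨c, hc⟩ := endomorphism_simple_eq_smul_id k F
  exact ⟨c, LinearMap.ext fun x => (congrArg (fun θ : X ⟶ X => θ.hom x) hc).symm⟩

theorem exists_eq_scalarUnits_of_commute {H : Type*} [Group H] (X : FDRep k H) [Simple X]
    (u : (Module.End k X)ˣ) (hu : ∀ h, Commute u (Representation.asGroupHom X.ρ h)) :
    ∃ c : kˣ, u = scalarUnits k X c := by
  obtain ⟨c, hc⟩ := X.exists_eq_algebraMap_of_commute u fun h => by
    simpa only [Representation.asGroupHom_apply] using (hu h).units_val
  have : Nontrivial X := X.nontrivial_of_simple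
  have hc0 : c ≠ 0 := by
    rintro rfl
    rw [map_zero] at hc
    exact u.ne_zero hc
  exact ⟨Units.mk0 c hc0, Units.ext hc⟩

end Schur

section FiniteGroup

variable {G H : Type} [Group G] [Finite G]

theorem nonempty_iso_of_character_eq (V W : FDRep ℂ G) [Simple V]
    (h : V.character = W.character) : Nonempty (V ≅ W) := by
  classical
  have := Fintype.ofFinite G
  have := invertibleOfNonzero (NeZero.ne (Nat.card G : ℂ))
  have : Simple W :=
    (simple_iff_char_is_norm_one W).mpr (h ▸ (simple_iff_char_is_norm_one V).mp ‹_›)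
  have hVW := char_orthonormal V W
  rw [← h, char_orthonormal V V, if_pos ⟨Iso.refl V⟩] at hVW
  by_contra hne
  rw [if_neg hne] at hVW
  exact one_ne_zero hVW

theorem exists_conj_eq_of_character_comp_eq (V : FDRep ℂ G) [Simple V] (σ : G →* G)
    (hσ : ∀ x, V.character (σ x) = V.character x) :
    ∃ t : (Module.End ℂ V)ˣ, ∀ x,
      t * Representation.asGroupHom V.ρ x * t⁻¹ = Representation.asGroupHom V.ρ (σ x) := by
  obtain ⟨i⟩ :=
    nonempty_iso_of_character_eq V (FDRep.of (V.ρ.comp σ)) (funext fun x => (hσ x).symm)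
  let e := isoToLinearEquiv i
  refine ⟨LinearMap.GeneralLinearGroup.ofLinearEquiv (M := V) e, fun x => Units.ext ?_⟩
  have hconj := (Iso.conj_ρ i x).symm
  simp only [Units.val_mul, Representation.asGroupHom_apply]
  exact hconj

theorem simple_of_comp_eq [Monoid H] (V : FDRep ℂ H) [Simple V] (f : H →* G)
    (σ : Representation ℂ G V) (hσ : ∀ x, σ (f x) = V.ρ x) : Simple (FDRep.of σ) := by
  have : Nontrivial V := nontrivial_of_simple V
  have hid : 𝟙 (FDRep.of σ) ≠ 0 := fun h => by
    obtain ⟨x, hx⟩ := exists_ne (0 : V)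
    exact hx (congrArg (fun θ : FDRep.of σ ⟶ FDRep.of σ => θ.hom x) h)
  rw [simple_iff_end_is_rank_one, finrank_eq_one_iff_of_nonzero' _ hid]
  intro w
  let w' : Module.End ℂ V := ConcreteCategory.hom (C := FGModuleCat ℂ) w.hom
  obtain ⟨c, hc⟩ := exists_eq_algebraMap_of_commute V w' fun x => by
    rw [← hσ]
    ext v
    exact congrFun (congrArg (fun θ : (FDRep.of σ).V ⟶ (FDRep.of σ).V => (θ : V → V))
      (w.comm (f x))) v
  refine ⟨c, ?_⟩
  ext v
  exact (LinearMap.congr_fun hc v).symm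

end FiniteGroup

end FDRep

theorem det_pow_charDetOrder {H : Type} [Group H] (V : FDRep ℂ H) (h : H) :
    LinearMap.det (V.ρ h) ^ charDetOrder V = 1 := by
  rw [← MonoidHom.comp_apply, ← MonoidHom.pow_apply, charDetOrder, pow_orderOf_eq_one,
    MonoidHom.one_apply]

/-- If `φ ∈ Irr(N)` is `G`-invariant, `φ(1)·o(φ)` is a power of `p`, and `p` does not
divide the order of the Schur multiplier of `G/N`, then `φ` extends to `G`. -/
theorem extends_of_not_dvd_schurMultiplier {G : Type} [Group G] [Finite G]
    (N : Subgroup G) [N.Normal] (p : ℕ) (hp : p.Prime)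
    (φ : FDRep ℂ ↥N) (hφ : Simple φ)
    (hinv : ∀ g : G, ∀ n : ↥N, ∀ h : g⁻¹ * ↑n * g ∈ N,
      φ.character ⟨g⁻¹ * ↑n * g, h⟩ = φ.character n)
    (hpow : ∃ k : ℕ, Module.finrank ℂ φ * charDetOrder φ = p ^ k)
    (hM : ¬ p ∣ Nat.card (schurMultiplier (G ⧸ N))) :
    ∃ χ : FDRep ℂ G, Simple χ ∧ ∀ n : ↥N, χ.character ↑n = φ.character n := by
  obtain ⟨k, hk⟩ := hpow
  have : Nontrivial φ := φ.nontrivial_of_simple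
  let ρ := Representation.asGroupHom φ.ρ
  have hconj (g : G) (n : N) : φ.character (MulAut.conjNormal g n) = φ.character n := by
    convert hinv g⁻¹ n (by simpa using (MulAut.conjNormal g n).2) using 2
    ext
    simp [MulAut.conjNormal_apply]
  have hdet (n : N) : Units.map LinearMap.det (ρ n) ^ charDetOrder φ = 1 :=
    Units.ext (by simpa [ρ, Representation.asGroupHom_apply] using det_pow_charDetOrder φ n)
  obtain ⟨U, hU⟩ := exists_isCompatibleLift ρ fun g =>
    φ.exists_conj_eq_of_character_comp_eq (MulAut.conjNormal g : N ≃* N).toMonoidHom (hconj g)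
  obtain ⟨α, hα⟩ :=
    hU.exists_factorSet (scalarUnits ℂ φ) φ.exists_eq_scalarUnits_of_commute
  have hcocycle := mem_twoCocycles_of_mul_eq scalarUnits_injective scalarUnits_mem_center hα
  have hcoboundary := hU.pow_mem_twoCoboundaries _ det_scalarUnits hdet hα
  rw [hk] at hcoboundary
  have hcop : (Nat.card (schurMultiplier (G ⧸ N))).Coprime (p ^ k) :=
    (Nat.Coprime.pow_left k ((Nat.Prime.coprime_iff_not_dvd hp).mpr hM)).symm
  obtain ⟨σ, hσ⟩ := hU.exists_extension_of_mem_twoCoboundaries scalarUnits_mem_center hα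
    (mem_twoCoboundaries_of_pow_mem hcop hcocycle hcoboundary)
  have hσρ (n : N) : (Units.coeHom _).comp σ n = φ.ρ n := by
    simp [hσ, ρ, Representation.asGroupHom_apply]
  refine ⟨FDRep.of ((Units.coeHom _).comp σ), φ.simple_of_comp_eq N.subtype _ hσρ,
    fun n => ?_⟩
  simp only [FDRep.character, FDRep.of_ρ', hσρ]
end

section
/- Let G be a finite group and x ∈ G an element of prime order p, and let t be any integer whose residue class generates the multiplicative group (ℤ/pℤ)ˣ. Then x is rational in G if and only if there exists a p'-element g ∈ G (an element whose order is coprime to p) such that g⁻¹xg = x^t. -/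
private lemma conj_pow_pow {G : Type*} [Group G] (x g : G) (t : ℤ)
    (h : g⁻¹ * x * g = x ^ t) : ∀ n : ℕ, (g ^ n)⁻¹ * x * g ^ n = x ^ (t ^ n)
  | 0 => by simp
  | n + 1 => by
    have ih := conj_pow_pow x g t h n
    have h1 : (g ^ (n + 1))⁻¹ * x * g ^ (n + 1) = g⁻¹ * ((g ^ n)⁻¹ * x * g ^ n) * g := by
      rw [pow_succ]; group
    rw [h1, ih]
    have h2 : g⁻¹ * x ^ (t ^ n) * g = (g⁻¹ * x * g) ^ (t ^ n) := by
      rw [show (g⁻¹ * x * g) ^ (t^n) = (g⁻¹ * x * g⁻¹⁻¹) ^ (t^n) by rw [inv_inv],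
        conj_zpow, inv_inv]
    rw [h2, h, ← zpow_mul, ← pow_succ']

private lemma xpow_congr {G : Type*} [Group G] {x : G} {p : ℕ} (hx : orderOf x = p)
    {a b : ℤ} (h : (a : ZMod p) = (b : ZMod p)) : x ^ a = x ^ b := by
  rw [zpow_eq_zpow_iff_modEq, hx]
  exact (ZMod.intCast_eq_intCast_iff a b p).1 h


/-- An element `x` of a finite group is *rational* if it is conjugate to every
generator of the cyclic group `⟨x⟩`. -/
def IsRationalElement {G : Type*} [Group G] (x : G) : Prop :=
  ∀ y : G, Subgroup.zpowers y = Subgroup.zpowers x → IsConj x y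

/-- An element of prime order `p` is rational iff some `p'`-element conjugates it to
`x ^ t`, where `t` generates `(ℤ/pℤ)ˣ`. -/
theorem rational_iff_conj_pow {G : Type*} [Group G] [Finite G] (p : ℕ) (hp : p.Prime)
    (x : G) (hx : orderOf x = p) (t : ℤ)
    (ht : ∃ u : (ZMod p)ˣ, (↑u : ZMod p) = (t : ZMod p) ∧
      ∀ v : (ZMod p)ˣ, v ∈ Subgroup.zpowers u) :
    IsRationalElement x ↔
      ∃ g : G, Nat.Coprime (orderOf g) p ∧ g⁻¹ * x * g = x ^ t := by
  haveI : Fact p.Prime := ⟨hp⟩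
  obtain ⟨u, hu, hgen⟩ := ht
  constructor
  · intro hrat
    -- zpowers (x ^ t) = zpowers x
    have hzp : Subgroup.zpowers (x ^ t) = Subgroup.zpowers x := by
      apply le_antisymm
      · rw [Subgroup.zpowers_le]
        exact Subgroup.zpow_mem _ (Subgroup.mem_zpowers x) t
      · rw [Subgroup.zpowers_le]
        refine ⟨(((u⁻¹ : (ZMod p)ˣ) : ZMod p).val : ℤ), ?_⟩
        show (x ^ t) ^ ((((u⁻¹ : (ZMod p)ˣ) : ZMod p).val : ℤ)) = x
        rw [← zpow_mul]
        refine (xpow_congr hx ?_).trans (zpow_one x)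
        push_cast [ZMod.natCast_val, ZMod.cast_id]
        rw [← hu, mul_comm]
        exact inv_mul_cancel₀ (Units.ne_zero u)
    obtain ⟨c, hc⟩ := isConj_iff.1 (hrat (x ^ t) hzp)
    set h := c⁻¹ with hh
    have hconj : h⁻¹ * x * h = x ^ t := by rw [hh, inv_inv]; exact hc
    -- CRT
    set n := orderOf h with hn
    have hn0 : n ≠ 0 := (orderOf_pos h).ne'
    have hcop : Nat.Coprime (p ^ n.factorization p) (p - 1) := by
      apply Nat.Coprime.pow_left
      have h2 : ¬ p ∣ (p - 1) := Nat.not_dvd_of_pos_of_lt (by have := hp.two_le; omega) (by have := hp.two_le; omega)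
      exact hp.coprime_iff_not_dvd.2 h2
    obtain ⟨k, hk0, hk1⟩ := Nat.chineseRemainder hcop 0 1
    refine ⟨h ^ k, ?_, ?_⟩
    · -- coprime order
      have hdvd : p ^ n.factorization p ∣ k := by
        simpa [Nat.modEq_zero_iff_dvd] using hk0
      obtain ⟨c', hc'⟩ := hdvd
      have h1 : orderOf (h ^ k) ∣ n / p ^ n.factorization p := by
        rw [hc', pow_mul]
        refine (orderOf_pow_dvd c').trans ?_
        rw [orderOf_dvd_iff_pow_eq_one, ← pow_mul, Nat.ordProj_mul_ordCompl_eq_self]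
        exact pow_orderOf_eq_one h
      have h2 : ¬ p ∣ orderOf (h ^ k) := fun hd =>
        Nat.not_dvd_ordCompl hp hn0 (hd.trans h1)
      exact (Nat.coprime_comm.mp ((hp.coprime_iff_not_dvd).2 h2))
    · rw [conj_pow_pow x h t hconj k]
      apply xpow_congr hx
      push_cast
      rw [← hu, ← Units.val_pow_eq_pow_val]
      congr 1
      rw [show u = u ^ 1 by rw [pow_one]]
      rw [← pow_mul, one_mul, pow_eq_pow_iff_modEq]
      refine Nat.ModEq.of_dvd ?_ hk1
      have := orderOf_dvd_card (x := u)
      rwa [ZMod.card_units p] at this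
  · rintro ⟨g, -, hg⟩ y hy
    obtain ⟨s, hs⟩ : y ∈ Subgroup.zpowers x := hy ▸ Subgroup.mem_zpowers y
    change x ^ s = y at hs
    have hyo : orderOf y = p := by
      rw [← Nat.card_zpowers, hy, Nat.card_zpowers, hx]
    have hs0 : (s : ZMod p) ≠ 0 := by
      intro h0
      have : x ^ s = 1 := by
        refine (xpow_congr hx (b := 0) ?_).trans (zpow_zero x)
        simpa using h0
      rw [hs] at this
      rw [this, orderOf_one] at hyo
      exact absurd hyo.symm hp.one_lt.ne'
    obtain ⟨v, hv⟩ := hs0.isUnit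
    obtain ⟨m, hm⟩ := mem_powers_iff_mem_zpowers.2 (hgen v)
    change u ^ m = v at hm
    have key : (g ^ m)⁻¹ * x * g ^ m = y := by
      rw [conj_pow_pow x g t hg m, ← hs]
      apply xpow_congr hx
      push_cast
      rw [← hu, ← Units.val_pow_eq_pow_val, hm, hv]
    exact isConj_iff.2 ⟨(g ^ m)⁻¹, by rw [inv_inv]; exact key⟩
end

section
/- Let G be a finite group, N ⊴ G, and x ∈ G with gcd(o(x), |N|) = 1, where o(x) is the order of x. If the coset xN is rational in G/N, then x is rational in G. -/
/-!
Take `e ≡ 1 (mod o(y))` with `|N| ∣ e`. On the coset `yN` the power map `w ↦ w ^ e` is a retraction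
onto the set `F` of its fixed points, which contains the `N`-conjugacy class of `y`, and its fibre
over `u ∈ F` is `u · C_N(u)`. The fibre of `b ↦ b y b⁻¹` on `N` over a conjugate `u` has the same
size `|C_N(u)|`, so summing `|C_N(u)|` over `F` and over the class of `y` both give `|N|`: the class
is all of `F`. Every element of `yN` of order `o(y)` lies in `F`, and if `xN` is rational then any
generator `y` of `⟨x⟩` has a `G`-conjugate of `x` in `yN`.
-/

open Finset

theorem Finset.eq_of_subset_of_sum_eq_sum {ι : Type*} {s t : Finset ι} {f : ι → ℕ} (hst : s ⊆ t)
    (hpos : ∀ i ∈ t, 0 < f i) (hsum : ∑ i ∈ s, f i = ∑ i ∈ t, f i) : s = t := by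
  by_contra hne
  obtain ⟨i, hit, his⟩ := exists_of_ssubset (hst.ssubset_of_ne hne)
  exact (sum_lt_sum_of_subset hst hit his (hpos i hit) fun _ _ _ ↦ Nat.zero_le _).ne hsum

section PowerMap

variable {G : Type*} [Group G] {N : Subgroup G} [N.Normal] {y w : G} {e : ℕ}

theorem mk_pow_eq_of_mk_eq (hye : y ^ e = y) (hw : (w : G ⧸ N) = y) :
    ((w ^ e : G) : G ⧸ N) = y := by
  rw [QuotientGroup.mk_pow, hw, ← QuotientGroup.mk_pow, hye]

theorem pow_pow_eq_pow_of_mk_eq (he : e ≡ 1 [MOD orderOf y]) (hNe : Nat.card N ∣ e)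
    (hw : (w : G ⧸ N) = y) : (w ^ e) ^ e = w ^ e := by
  have hwo : w ^ orderOf y ∈ N := by
    rw [← QuotientGroup.eq_one_iff, QuotientGroup.mk_pow, hw, ← QuotientGroup.mk_pow,
      pow_orderOf_eq_one, QuotientGroup.mk_one]
  have hdvd : orderOf w ∣ orderOf y * e := by
    refine (orderOf_dvd_of_pow_eq_one ?_).trans (mul_dvd_mul_left _ hNe)
    rw [pow_mul]
    exact orderOf_dvd_iff_pow_eq_one.mp (N.orderOf_dvd_natCard hwo)
  rw [← pow_mul, pow_eq_pow_iff_modEq]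
  simpa using (he.mul_right' e).of_dvd hdvd

end PowerMap

section CosetCounting

variable {G : Type*} [Group G] [Fintype G] (N : Subgroup G) [DecidablePred (· ∈ N)]

theorem card_filter_mk_eq [N.Normal] (y : G) : #{w : G | (w : G ⧸ N) = y} = Nat.card N :=
  calc #{w : G | (w : G ⧸ N) = y} = #{w : G | (w : G ⧸ N) = (1 : G)} :=
        MonoidHom.card_fiber_eq_of_mem_range (QuotientGroup.mk' N) ⟨y, rfl⟩ ⟨1, rfl⟩
    _ = Nat.card N := by
        simp [QuotientGroup.eq_one_iff, Nat.card_eq_fintype_card, Fintype.card_subtype]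

theorem card_filter_mem : #{w | w ∈ N} = Nat.card N := by
  simp [Nat.card_eq_fintype_card, Fintype.card_subtype]

variable [DecidableEq G]

theorem card_filter_conj_eq {a : G} (ha : a ∈ N) (y : G) :
    #{b | b ∈ N ∧ b * y * b⁻¹ = a * y * a⁻¹} =
      #{c | c ∈ N ∧ c * (a * y * a⁻¹) = a * y * a⁻¹ * c} := by
  refine card_nbij' (· * a⁻¹) (· * a) ?_ ?_ (fun _ _ ↦ by simp) (fun _ _ ↦ by simp)
  · intro b hb
    simp only [coe_filter, mem_univ, true_and, Set.mem_ofPred_eq] at hb ⊢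
    refine ⟨N.mul_mem hb.1 (N.inv_mem ha), ?_⟩
    calc b * a⁻¹ * (a * y * a⁻¹) = b * y * b⁻¹ * (b * a⁻¹) := by group
      _ = a * y * a⁻¹ * (b * a⁻¹) := by rw [hb.2]
  · intro c hc
    simp only [coe_filter, mem_univ, true_and, Set.mem_ofPred_eq] at hc ⊢
    refine ⟨N.mul_mem hc.1 ha, ?_⟩
    calc c * a * y * (c * a)⁻¹ = c * (a * y * a⁻¹) * c⁻¹ := by group
      _ = a * y * a⁻¹ := by rw [hc.2, mul_inv_cancel_right]

theorem card_filter_pow_eq {e : ℕ} (hNe : Nat.card N ∣ e) {y z : G} (hz : (z : G ⧸ N) = y)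
    (hze : z ^ e = z) :
    #{w : G | (w : G ⧸ N) = y ∧ w ^ e = z} = #{c | c ∈ N ∧ c * z = z * c} := by
  refine card_nbij' (z⁻¹ * ·) (z * ·) ?_ ?_ (fun _ _ ↦ by simp) (fun _ _ ↦ by simp)
  · intro w hw
    simp only [coe_filter, mem_univ, true_and, Set.mem_ofPred_eq] at hw ⊢
    obtain ⟨hw, rfl⟩ := hw
    refine ⟨QuotientGroup.eq.mp (hz.trans hw.symm), ?_⟩
    rw [mul_inv_cancel_left, mul_assoc, (Commute.self_pow w e).eq, inv_mul_cancel_left]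
  · intro c hc
    simp only [coe_filter, mem_univ, true_and, Set.mem_ofPred_eq] at hc ⊢
    have hce : c ^ e = 1 :=
      orderOf_dvd_iff_pow_eq_one.mp ((N.orderOf_dvd_natCard hc.1).trans hNe)
    refine ⟨(QuotientGroup.mk_mul_of_mem z hc.1).trans hz, ?_⟩
    rw [(Commute.mul_pow hc.2.symm e), hze, hce, mul_one]

variable {N} [N.Normal]

theorem exists_conj_eq_of_pow_eq_self {e : ℕ} {y z : G} (he : e ≡ 1 [MOD orderOf y])
    (hNe : Nat.card N ∣ e) (hz : (z : G ⧸ N) = y) (hze : z ^ e = z) :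
    ∃ a ∈ N, a * y * a⁻¹ = z := by
  have hye : y ^ e = y := by simpa using pow_eq_pow_iff_modEq.mpr he
  let weight : G → ℕ := fun u ↦ #{c | c ∈ N ∧ c * u = u * c}
  let fixed : Finset G := {w | (w : G ⧸ N) = y ∧ w ^ e = w}
  let orbit : Finset G := ({b | b ∈ N} : Finset G).image (fun b ↦ b * y * b⁻¹)
  have h_fixed : ∑ z ∈ fixed, weight z = Nat.card N := by
    rw [← card_filter_mk_eq N y, card_eq_sum_card_fiberwise (f := (· ^ e)) (t := fixed)]
    · refine sum_congr rfl fun u hu ↦ ?_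
      simp only [fixed, mem_filter, mem_univ, true_and] at hu
      rw [filter_filter]
      exact (card_filter_pow_eq N hNe hu.1 hu.2).symm
    · intro w hw
      simp only [fixed, coe_filter, mem_univ, true_and, Set.mem_ofPred_eq] at hw ⊢
      exact ⟨mk_pow_eq_of_mk_eq hye hw, pow_pow_eq_pow_of_mk_eq he hNe hw⟩
  have h_orbit : ∑ z ∈ orbit, weight z = Nat.card N := by
    rw [← card_filter_mem, card_eq_sum_card_fiberwise (f := fun b ↦ b * y * b⁻¹) (t := orbit)]
    · refine sum_congr rfl fun u hu ↦ ?_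
      obtain ⟨a, ha, rfl⟩ := mem_image.mp hu
      rw [filter_filter]
      exact (card_filter_conj_eq N (by simpa using ha) y).symm
    · exact fun b hb ↦ mem_image_of_mem _ hb
  have h_sub : orbit ⊆ fixed := by
    intro w hw
    obtain ⟨b, hb, rfl⟩ := mem_image.mp hw
    have hb1 : (b : G ⧸ N) = 1 := (QuotientGroup.eq_one_iff b).mpr (by simpa using hb)
    simp only [fixed, mem_filter, mem_univ, true_and]
    exact ⟨by simp [hb1], by rw [conj_pow, hye]⟩
  have h_eq := eq_of_subset_of_sum_eq_sum h_sub (fun _ _ ↦ card_pos.mpr ⟨1, by simp⟩)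
    (h_orbit.trans h_fixed.symm)
  have hz_orbit : z ∈ orbit := h_eq ▸ (by simp [fixed, hz, hze])
  simpa [orbit] using hz_orbit

end CosetCounting

theorem exists_conj_eq_of_orderOf_eq_of_coprime {G : Type*} [Group G] [Finite G]
    {N : Subgroup G} [N.Normal] {y z : G} (hcop : (orderOf y).Coprime (Nat.card N))
    (hz : (z : G ⧸ N) = y) (hzo : orderOf z = orderOf y) : ∃ a ∈ N, a * y * a⁻¹ = z := by
  classical
  have := Fintype.ofFinite G
  obtain ⟨e, he, hNe⟩ := Nat.chineseRemainder hcop 1 0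
  refine exists_conj_eq_of_pow_eq_self he (Nat.modEq_zero_iff_dvd.mp hNe) hz ?_
  simpa using pow_eq_pow_iff_modEq.mpr (hzo ▸ he : e ≡ 1 [MOD orderOf z])

/-- If `gcd(o(x), |N|) = 1` and `xN` is rational in `G/N`, then `x` is rational in `G`. -/
theorem rational_of_quotient_coprime {G : Type*} [Group G] [Finite G] (N : Subgroup G)
    [N.Normal] (x : G) (hcop : Nat.Coprime (orderOf x) (Nat.card N))
    (hx : IsRationalElement (QuotientGroup.mk x : G ⧸ N)) :
    IsRationalElement x := by
  intro y hy
  have horder : orderOf y = orderOf x := by rw [← Nat.card_zpowers, ← Nat.card_zpowers, hy]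
  have hq : Subgroup.zpowers (y : G ⧸ N) = Subgroup.zpowers (x : G ⧸ N) := by
    simpa [MonoidHom.map_zpowers] using congrArg (Subgroup.map (QuotientGroup.mk' N)) hy
  obtain ⟨c, hc⟩ := isConj_iff.mp (hx _ hq)
  obtain ⟨g, rfl⟩ := QuotientGroup.mk_surjective c
  obtain ⟨a, -, ha⟩ := exists_conj_eq_of_orderOf_eq_of_coprime (N := N) (y := y)
    (z := g * x * g⁻¹) (horder ▸ hcop) (by simpa using hc)
    (by simpa [horder] using (MulAut.conj g).orderOf_eq x)
  exact (isConj_iff.mpr ⟨g, rfl⟩).trans (isConj_iff.mpr ⟨a, ha⟩).symm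
end

section
/- Let f ≥ 3 be an odd integer, let S = PSL₂(3^f), and let G be a group with Inn(S) ≤ G ≤ Aut(S) such that the quotient G/Inn(S) is cyclic and generated by (the image of) a field automorphism of odd order dividing f. If x ∈ G is a rational element of prime power order with o(x) ∉ {1, 2}, then x ∈ Inn(S) and the order of x is odd. -/
open CategoryTheory

instance : Fact (Nat.Prime 3) := ⟨by norm_num⟩

/-- `SL₂(F)`. -/
abbrev SL2 (F : Type*) [CommRing F] := Matrix.SpecialLinearGroup (Fin 2) F

/-- `PSL₂(F) = SL₂(F)/Z(SL₂(F))`. -/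
abbrev PSL2 (F : Type*) [CommRing F] := SL2 F ⧸ Subgroup.center (SL2 F)

/-- `PGL₂(F) = GL₂(F)/Z(GL₂(F))`. -/
abbrev PGL2 (F : Type*) [CommRing F] :=
  Matrix.GeneralLinearGroup (Fin 2) F ⧸
    Subgroup.center (Matrix.GeneralLinearGroup (Fin 2) F)

/-- The subgroup of inner automorphisms of `S` inside `Aut(S)`. -/
def innAut (S : Type*) [Group S] : Subgroup (MulAut S) :=
  (MulAut.conj : S →* MulAut S).range

instance innAut_normal (S : Type*) [Group S] : (innAut S).Normal := by
  constructor
  rintro α ⟨s, rfl⟩ β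
  refine ⟨β s, ?_⟩
  ext x
  simp [MulAut.conj]

/-- `α` is a field automorphism of `PSL₂(F)` if it is induced by a ring automorphism
of `F` applied entrywise. -/
def IsFieldAutPSL2 {F : Type*} [Field F] (α : MulAut (PSL2 F)) : Prop :=
  ∃ σ : F ≃+* F, ∀ A : SL2 F,
    α (QuotientGroup.mk A) =
      QuotientGroup.mk (Matrix.SpecialLinearGroup.map (σ : F →+* F) A)

/-!
A rational element `x` is conjugate to `x ^ 2` when `o(x)` is odd, so its image in the abelian
quotient `G / Inn(S)` equals its own square and is trivial. When `o(x) = 2 ^ k` with `k ≥ 2`, the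
image of `x` lies in a cyclic group of odd order, so again `x` is inner, and then `S` would contain
an element of order `4`. That is impossible in `PSL₂(F)` whenever `2` is not a square in `F`, as
for `F = 𝔽_{3^f}` with `f` odd (`3 ^ f ≡ 3 mod 8`): by Cayley–Hamilton a matrix `A ∈ SL₂(F)` of
trace `t` satisfies `A ^ 4 = (t ^ 3 - 2 t) A + (1 - t ^ 2)`, so if `A ^ 4` is scalar then either
`A` is scalar, or `t = 0` and `A ^ 2 = -1`, or `t ^ 2 = 2`.
-/

section Rational

variable {G : Type*} [Group G]

theorem IsRationalElement.isConj_pow {x : G} (hx : IsRationalElement x) {n : ℕ}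
    (hn : n.Coprime (orderOf x)) : IsConj x (x ^ n) :=
  hx _ <| le_antisymm (Subgroup.zpowers_le.mpr (Subgroup.pow_mem _ (Subgroup.mem_zpowers x) n))
    (Subgroup.zpowers_le.mpr (mem_zpowers_pow_iff.mpr hn))

open scoped IsMulCommutative in
theorem IsRationalElement.map_eq_one_of_odd_orderOf {A : Type*} [Group A] [IsMulCommutative A]
    (φ : G →* A) {x : G} (hx : IsRationalElement x) (hodd : Odd (orderOf x)) : φ x = 1 := by
  have h := φ.map_isConj (hx.isConj_pow (Nat.coprime_two_left.mpr hodd))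
  rw [isConj_iff_eq, map_pow, pow_two] at h
  exact left_eq_mul.mp h

theorem MonoidHom.map_eq_one_of_coprime_orderOf {A : Type*} [Group A] (φ : G →* A) {x : G}
    {g : A} (hx : φ x ∈ Subgroup.zpowers g) (hcop : (orderOf x).Coprime (orderOf g)) :
    φ x = 1 :=
  orderOf_eq_one_iff.mp <|
    (hcop.coprime_dvd_left (orderOf_map_dvd φ x)).eq_one_of_dvd (orderOf_dvd_of_mem_zpowers hx)

end Rational

namespace Matrix

variable {R : Type*} [CommRing R]

theorem SpecialLinearGroup.mem_center_iff_exists_smul_one {n : Type*} [Fintype n] [DecidableEq n]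
    {A : SpecialLinearGroup n R} :
    A ∈ Subgroup.center (SpecialLinearGroup n R) ↔ ∃ r : R, (A : Matrix n n R) = r • 1 := by
  constructor
  · intro hA
    obtain ⟨r, -, hr⟩ := SpecialLinearGroup.mem_center_iff.mp hA
    exact ⟨r, by rw [← hr, scalar_apply, smul_one_eq_diagonal]⟩
  · rintro ⟨r, hr⟩
    refine Subgroup.mem_center_iff.mpr fun B ↦ Subtype.ext ?_
    simp only [SpecialLinearGroup.coe_mul, hr, mul_smul_comm, smul_mul_assoc, mul_one, one_mul]

theorem sq_fin_two_eq_trace_smul_sub_det_smul (M : Matrix (Fin 2) (Fin 2) R) :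
    M ^ 2 = M.trace • M - M.det • 1 := by
  ext i j
  fin_cases i <;> fin_cases j <;>
    simp [sq, mul_apply, Fin.sum_univ_two, trace_fin_two, det_fin_two] <;> ring

theorem pow_four_fin_two_of_det_eq_one {M : Matrix (Fin 2) (Fin 2) R} (hM : M.det = 1) :
    M ^ 4 = (M.trace ^ 3 - 2 * M.trace) • M + (1 - M.trace ^ 2) • 1 := by
  have hsq : M ^ 2 = M.trace • M - 1 := by
    rw [sq_fin_two_eq_trace_smul_sub_det_smul, hM, one_smul]
  calc M ^ 4 = (M.trace • M - 1) ^ 2 := by rw [← hsq, ← pow_mul]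
    _ = M.trace ^ 2 • M ^ 2 - (2 * M.trace) • M + 1 := by
      rw [sq (_ - 1), sq M]
      simp only [sub_mul, mul_sub, smul_mul_assoc, mul_smul_comm, one_mul, mul_one]
      module
    _ = _ := by rw [hsq]; module

theorem eq_smul_one_or_sq_eq_neg_one_of_pow_four_eq_smul_one {F : Type*} [Field F]
    (h2 : ¬ IsSquare (2 : F)) {M : Matrix (Fin 2) (Fin 2) F} (hdet : M.det = 1) {r : F}
    (h4 : M ^ 4 = r • 1) : (∃ c : F, M = c • 1) ∨ M ^ 2 = -1 := by
  have hsq := sq_fin_two_eq_trace_smul_sub_det_smul M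
  have hfour := pow_four_fin_two_of_det_eq_one hdet
  rw [hdet, one_smul] at hsq
  generalize M.trace = t at hsq hfour
  by_cases ht : t * (t ^ 2 - 2) = 0
  · rcases mul_eq_zero.mp ht with ht | ht
    · right
      rw [hsq, ht, zero_smul, zero_sub]
    · exact absurd ⟨t, by linear_combination -ht⟩ h2
  · left
    have key : (t * (t ^ 2 - 2)) • M = (r - (1 - t ^ 2)) • 1 := by
      rw [sub_smul, ← h4, hfour]
      module
    exact ⟨(t * (t ^ 2 - 2))⁻¹ * (r - (1 - t ^ 2)), by
      rw [mul_smul, ← key, smul_smul, inv_mul_cancel₀ ht, one_smul]⟩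

end Matrix

section PSL2

variable {F : Type*} [Field F]

theorem PSL2.orderOf_ne_four (h2 : ¬ IsSquare (2 : F)) (s : PSL2 F) : orderOf s ≠ 4 := by
  obtain ⟨A, rfl⟩ := QuotientGroup.mk_surjective s
  intro h4
  obtain ⟨hA4, hlt⟩ := (orderOf_eq_iff (by norm_num)).mp h4
  have hA : A ∉ Subgroup.center (SL2 F) := fun h ↦
    hlt 1 (by norm_num) one_pos (by rw [pow_one]; exact (QuotientGroup.eq_one_iff A).mpr h)
  have hA2 : A ^ 2 ∉ Subgroup.center (SL2 F) := fun h ↦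
    hlt 2 (by norm_num) two_pos ((QuotientGroup.eq_one_iff (A ^ 2)).mpr h)
  obtain ⟨r, hr⟩ := Matrix.SpecialLinearGroup.mem_center_iff_exists_smul_one.mp
    ((QuotientGroup.eq_one_iff (A ^ 4)).mp hA4)
  rw [Matrix.SpecialLinearGroup.coe_pow] at hr
  rcases Matrix.eq_smul_one_or_sq_eq_neg_one_of_pow_four_eq_smul_one h2 A.property hr with
    ⟨c, hc⟩ | hsq
  · exact hA (Matrix.SpecialLinearGroup.mem_center_iff_exists_smul_one.mpr ⟨c, hc⟩)
  · refine hA2 (Matrix.SpecialLinearGroup.mem_center_iff_exists_smul_one.mpr ⟨-1, ?_⟩)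
    rw [Matrix.SpecialLinearGroup.coe_pow, hsq, neg_one_smul]

theorem PSL2.not_four_dvd_orderOf [Finite F] (h2 : ¬ IsSquare (2 : F)) (s : PSL2 F) :
    ¬ 4 ∣ orderOf s := by
  intro h4
  exact orderOf_ne_four h2 _ (orderOf_pow_orderOf_div (orderOf_pos s).ne' h4)

end PSL2

theorem GaloisField.not_isSquare_two {f : ℕ} (hf : Odd f) : ¬ IsSquare (2 : GaloisField 3 f) := by
  have : Fintype (GaloisField 3 f) := Fintype.ofFinite _
  have hcard : Fintype.card (GaloisField 3 f) = 3 ^ f := by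
    rw [← Nat.card_eq_fintype_card]
    exact GaloisField.card 3 f (by rintro rfl; simp at hf)
  obtain ⟨m, rfl⟩ := hf
  have hmod : 3 ^ (2 * m + 1) % 8 = 3 := by
    rw [pow_succ, pow_mul, Nat.mul_mod, Nat.pow_mod]
    norm_num
  simp [FiniteField.isSquare_two_iff, hcard, hmod]

theorem rational_prime_power_elements_general (f : ℕ) (hf : Odd f)
    (G : Subgroup (MulAut (PSL2 (GaloisField 3 f))))
    (τ : ↥G)
    (hgen : ∀ y : ↥G ⧸ (innAut (PSL2 (GaloisField 3 f))).subgroupOf G,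
      y ∈ Subgroup.zpowers (QuotientGroup.mk τ))
    (hodd : Odd (orderOf (QuotientGroup.mk τ :
      ↥G ⧸ (innAut (PSL2 (GaloisField 3 f))).subgroupOf G))) :
    ∀ x : ↥G, IsRationalElement x → (∃ p k : ℕ, p.Prime ∧ orderOf x = p ^ k) →
      orderOf x ≠ 1 → orderOf x ≠ 2 →
      (↑x : MulAut (PSL2 (GaloisField 3 f))) ∈ innAut (PSL2 (GaloisField 3 f)) ∧
        Odd (orderOf x) := by
  intro x hrat ⟨p, k, hp, hord⟩ h1 h2
  let π := QuotientGroup.mk' ((innAut (PSL2 (GaloisField 3 f))).subgroupOf G)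
  have : IsCyclic (↥G ⧸ (innAut (PSL2 (GaloisField 3 f))).subgroupOf G) := ⟨⟨_, hgen⟩⟩
  have hinn : π x = 1 → (↑x : MulAut (PSL2 (GaloisField 3 f))) ∈ innAut _ := fun h ↦
    Subgroup.mem_subgroupOf.mp ((QuotientGroup.eq_one_iff x).mp h)
  rcases hp.eq_two_or_odd' with rfl | hpodd
  · exfalso
    have hk : 2 ≤ k := by
      by_contra! hk
      interval_cases k <;> simp_all
    have hcop : (orderOf x).Coprime (orderOf (π τ)) :=
      hord ▸ (Nat.coprime_two_left.mpr hodd).pow_left k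
    obtain ⟨s, hs⟩ := hinn (π.map_eq_one_of_coprime_orderOf (hgen _) hcop)
    refine PSL2.not_four_dvd_orderOf (GaloisField.not_isSquare_two hf) s ?_
    calc 4 = 2 ^ 2 := rfl
      _ ∣ 2 ^ k := pow_dvd_pow 2 hk
      _ = orderOf (MulAut.conj s) := by rw [hs, Subgroup.orderOf_coe, hord]
      _ ∣ orderOf s := orderOf_map_dvd _ _
  · have hxodd : Odd (orderOf x) := hord ▸ hpodd.pow
    exact ⟨hinn (hrat.map_eq_one_of_odd_orderOf π hxodd), hxodd⟩

/-- Let `S = PSL₂(3^f)` (`f ≥ 3` odd) and `Inn(S) ≤ G ≤ Aut(S)` with `G/Inn(S)` cyclic,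
generated by the image of a field automorphism of odd order dividing `f`. Then every
rational element of `G` of prime power order `∉ {1, 2}` lies in `Inn(S)` and has odd
order. -/
theorem rational_prime_power_elements (f : ℕ) (hf : Odd f) (hf3 : 3 ≤ f)
    (G : Subgroup (MulAut (PSL2 (GaloisField 3 f))))
    (hG : innAut (PSL2 (GaloisField 3 f)) ≤ G)
    (τ : ↥G) (hτ : IsFieldAutPSL2 (↑τ : MulAut (PSL2 (GaloisField 3 f))))
    (hgen : ∀ y : ↥G ⧸ (innAut (PSL2 (GaloisField 3 f))).subgroupOf G,
      y ∈ Subgroup.zpowers (QuotientGroup.mk τ))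
    (hodd : Odd (orderOf (QuotientGroup.mk τ :
      ↥G ⧸ (innAut (PSL2 (GaloisField 3 f))).subgroupOf G)))
    (hdvd : orderOf (QuotientGroup.mk τ :
      ↥G ⧸ (innAut (PSL2 (GaloisField 3 f))).subgroupOf G) ∣ f) :
    ∀ x : ↥G, IsRationalElement x → (∃ p k : ℕ, p.Prime ∧ orderOf x = p ^ k) →
      orderOf x ≠ 1 → orderOf x ≠ 2 →
      (↑x : MulAut (PSL2 (GaloisField 3 f))) ∈ innAut (PSL2 (GaloisField 3 f)) ∧
        Odd (orderOf x) :=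
  rational_prime_power_elements_general f hf G τ hgen hodd
end
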